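/- For the random feature map φ_exp(x) = (1/√m)·exp(−‖x‖²/2)·(exp(ω₁ᵀx), …, exp(ω_mᵀx)) with ω₁,…,ω_m drawn i.i.d. from the standard Gaussian N(0, I_d), the expectation E[φ_exp(x)ᵀ φ_exp(y)] equals exp(xᵀy) for all x, y ∈ ℝ^d. In particular, φ_exp provides an unbiased estimator of the softmax (exponential) attention kernel. -/

import Mathlib

/-! By linearity of expectation it suffices that a single feature is unbiased. For `ω ~ N(0, I)`,
`exp⟪ω, x⟫ exp⟪ω, y⟫ = exp⟪ω, x + y⟫` has mean `exp (‖x + y‖² / 2)` (the Gaussian moment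
generating function), and `‖x + y‖² - ‖x‖² - ‖y‖² = 2⟪x, y⟫`. The moment generating function of
`N(0, I_d)` factors over coordinates because its density is a product of one-dimensional standard
Gaussian densities. -/

open MeasureTheory

/-- The standard Gaussian measure `N(0, I_d)` on `ℝ^d`, given by its density
`(2π)^(−d/2) exp(−‖ω‖²/2)` with respect to Lebesgue measure. -/
noncomputable def stdGaussian (d : ℕ) : Measure (EuclideanSpace ℝ (Fin d)) :=
  volume.withDensity fun ω =>
    ENNReal.ofReal ((2 * Real.pi) ^ (-(d : ℝ) / 2) * Real.exp (-‖ω‖ ^ 2 / 2))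

open Real WithLp
open ProbabilityTheory hiding stdGaussian

lemma stdGaussian_density_toLp_eq_prod (d : ℕ) (a : Fin d → ℝ) :
    (2 * π) ^ (-(d : ℝ) / 2) * exp (-‖toLp 2 a‖ ^ 2 / 2) =
      ∏ i, gaussianPDFReal 0 1 (a i) := by
  have hconst : (2 * π) ^ (-(d : ℝ) / 2) = (√(2 * π))⁻¹ ^ d := by
    rw [sqrt_eq_rpow, ← rpow_neg (by positivity), ← rpow_mul_natCast (by positivity)]
    ring_nf
  simp only [gaussianPDFReal, NNReal.coe_one, mul_one, sub_zero, Finset.prod_mul_distrib,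
    Finset.prod_const, Finset.card_univ, Fintype.card_fin, ← exp_sum, hconst,
    EuclideanSpace.norm_sq_eq, ← Finset.sum_div, ← Finset.sum_neg_distrib]
  simp [Real.norm_eq_abs, sq_abs]

lemma exp_inner_toLp_eq_prod {d : ℕ} (a : Fin d → ℝ) (v : EuclideanSpace ℝ (Fin d)) :
    exp (inner ℝ (toLp 2 a) v) = ∏ i, exp (v i * a i) := by
  simp [PiLp.inner_apply, exp_sum]

lemma integral_gaussianPDFReal_mul_exp (μ : ℝ) {v : NNReal} (hv : v ≠ 0) (c : ℝ) :
    ∫ t, gaussianPDFReal μ v t * exp (c * t) = exp (μ * c + v * c ^ 2 / 2) := by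
  have h := congrFun (mgf_id_gaussianReal (μ := μ) (v := v)) c
  rwa [mgf, integral_gaussianReal_eq_integral_smul hv] at h

lemma integrable_gaussianPDFReal_mul_exp (μ : ℝ) {v : NNReal} (hv : v ≠ 0) (c : ℝ) :
    Integrable fun t => gaussianPDFReal μ v t * exp (c * t) := by
  have h := integrable_exp_mul_gaussianReal (μ := μ) (v := v) c
  rw [gaussianReal_of_var_ne_zero _ hv, gaussianPDF_def,
    integrable_withDensity_iff_integrable_smul' (by fun_prop) (by simp)] at h
  refine h.congr (ae_of_all _ fun t => ?_)
  simp [ENNReal.toReal_ofReal (gaussianPDFReal_nonneg _ _ _)]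

lemma integral_stdGaussian_eq {E : Type*} [NormedAddCommGroup E] [NormedSpace ℝ E] (d : ℕ)
    (f : EuclideanSpace ℝ (Fin d) → E) :
    ∫ ω, f ω ∂stdGaussian d =
      ∫ a : Fin d → ℝ, (∏ i, gaussianPDFReal 0 1 (a i)) • f (toLp 2 a) := by
  rw [stdGaussian, integral_withDensity_eq_integral_toReal_smul (by fun_prop)
      (ae_of_all _ fun _ => ENNReal.ofReal_lt_top),
    ← (PiLp.volume_preserving_toLp (Fin d)).integral_comp
      (MeasurableEquiv.toLp 2 _).measurableEmbedding]
  congr 1 with a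
  rw [ENNReal.toReal_ofReal (by positivity), stdGaussian_density_toLp_eq_prod]

lemma integrable_stdGaussian_iff {E : Type*} [NormedAddCommGroup E] [NormedSpace ℝ E] (d : ℕ)
    (f : EuclideanSpace ℝ (Fin d) → E) :
    Integrable f (stdGaussian d) ↔
      Integrable fun a : Fin d → ℝ => (∏ i, gaussianPDFReal 0 1 (a i)) • f (toLp 2 a) := by
  rw [stdGaussian, integrable_withDensity_iff_integrable_smul' (by fun_prop)
      (ae_of_all _ fun _ => ENNReal.ofReal_lt_top),
    ← (PiLp.volume_preserving_toLp (Fin d)).integrable_comp_emb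
      (MeasurableEquiv.toLp 2 _).measurableEmbedding]
  refine integrable_congr (ae_of_all _ fun a => ?_)
  rw [Function.comp_apply, ENNReal.toReal_ofReal (by positivity),
    stdGaussian_density_toLp_eq_prod]

lemma integral_exp_inner_stdGaussian (d : ℕ) (v : EuclideanSpace ℝ (Fin d)) :
    ∫ ω, exp (inner ℝ ω v) ∂stdGaussian d = exp (‖v‖ ^ 2 / 2) := by
  simp_rw [integral_stdGaussian_eq, smul_eq_mul, exp_inner_toLp_eq_prod,
    ← Finset.prod_mul_distrib]
  rw [integral_fintype_prod_volume_eq_prod (fun i t => gaussianPDFReal 0 1 t * exp (v i * t))]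
  simp_rw [integral_gaussianPDFReal_mul_exp 0 one_ne_zero, zero_mul, NNReal.coe_one, one_mul,
    zero_add, ← exp_sum, EuclideanSpace.norm_sq_eq,
    Finset.sum_div, Real.norm_eq_abs, sq_abs]

lemma integrable_exp_inner_stdGaussian (d : ℕ) (v : EuclideanSpace ℝ (Fin d)) :
    Integrable (fun ω => exp (inner ℝ ω v)) (stdGaussian d) := by
  simp_rw [integrable_stdGaussian_iff, smul_eq_mul, exp_inner_toLp_eq_prod,
    ← Finset.prod_mul_distrib]
  exact Integrable.fintype_prod fun i => integrable_gaussianPDFReal_mul_exp 0 one_ne_zero (v i)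

instance isProbabilityMeasure_stdGaussian (d : ℕ) : IsProbabilityMeasure (stdGaussian d) := by
  have h : (stdGaussian d).real Set.univ = 1 := by
    simpa using integral_exp_inner_stdGaussian d 0
  exact ⟨(ENNReal.toReal_eq_one_iff _).mp h⟩

noncomputable def expFeature {d : ℕ} (x ω : EuclideanSpace ℝ (Fin d)) : ℝ :=
  exp (-‖x‖ ^ 2 / 2) * exp (inner ℝ ω x)

lemma expFeature_mul_expFeature {d : ℕ} (x y ω : EuclideanSpace ℝ (Fin d)) :
    expFeature x ω * expFeature y ω =
      exp (-(‖x‖ ^ 2 + ‖y‖ ^ 2) / 2) * exp (inner ℝ ω (x + y)) := by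
  simp only [expFeature, ← exp_add, inner_add_right]
  ring_nf

lemma integrable_expFeature_mul_expFeature (d : ℕ) (x y : EuclideanSpace ℝ (Fin d)) :
    Integrable (fun ω => expFeature x ω * expFeature y ω) (stdGaussian d) := by
  simp_rw [expFeature_mul_expFeature]
  exact (integrable_exp_inner_stdGaussian d (x + y)).const_mul _

lemma integral_expFeature_mul_expFeature (d : ℕ) (x y : EuclideanSpace ℝ (Fin d)) :
    ∫ ω, expFeature x ω * expFeature y ω ∂stdGaussian d = exp (inner ℝ x y) := by
  simp_rw [expFeature_mul_expFeature]
  rw [integral_const_mul, integral_exp_inner_stdGaussian, ← exp_add, norm_add_sq_real]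
  ring_nf

theorem performer_exp_unbiased_general (d m : ℕ) (hm : 0 < m)
    (x y : EuclideanSpace ℝ (Fin d)) :
    ∫ ω : Fin m → EuclideanSpace ℝ (Fin d),
      (∑ i : Fin m,
        ((Real.sqrt m)⁻¹ * Real.exp (-‖x‖ ^ 2 / 2) * Real.exp ((inner ℝ (ω i) x : ℝ))) *
        ((Real.sqrt m)⁻¹ * Real.exp (-‖y‖ ^ 2 / 2) * Real.exp ((inner ℝ (ω i) y : ℝ))))
      ∂(Measure.pi fun _ : Fin m => stdGaussian d)
    = Real.exp ((inner ℝ x y : ℝ)) := by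
  have hsummand (w : EuclideanSpace ℝ (Fin d)) :
      (√m)⁻¹ * exp (-‖x‖ ^ 2 / 2) * exp (inner ℝ w x) *
        ((√m)⁻¹ * exp (-‖y‖ ^ 2 / 2) * exp (inner ℝ w y)) =
        (m : ℝ)⁻¹ * (expFeature x w * expFeature y w) := by
    have hsqrt : (√m)⁻¹ * (√m)⁻¹ = (m : ℝ)⁻¹ := by
      rw [← mul_inv, mul_self_sqrt (Nat.cast_nonneg m)]
    rw [expFeature, expFeature, ← hsqrt]
    ring
  have hint := (integrable_expFeature_mul_expFeature d x y).const_mul (m : ℝ)⁻¹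
  simp_rw [hsummand]
  rw [integral_finsetSum _ fun i _ => integrable_comp_eval (i := i) hint]
  simp_rw [integral_comp_eval (μ := fun _ => stdGaussian d) hint.aestronglyMeasurable,
    integral_const_mul, integral_expFeature_mul_expFeature]
  rw [Finset.sum_const, Finset.card_univ, Fintype.card_fin, nsmul_eq_mul,
    mul_inv_cancel_left₀ (Nat.cast_ne_zero.mpr hm.ne')]

/-- For the random feature map
`φ_exp(x) = (1/√m)·exp(−‖x‖²/2)·(exp(ω₁ᵀx), …, exp(ω_mᵀx))` with `ω₁, …, ω_m` i.i.d.
standard Gaussians, `E[φ_exp(x)ᵀ φ_exp(y)] = exp(xᵀy)`:  `φ_exp` is an unbiased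
estimator of the softmax (exponential) attention kernel. -/
theorem performer_exp_unbiased (d m : ℕ) (hd : 0 < d) (hm : 0 < m)
    (x y : EuclideanSpace ℝ (Fin d)) :
    ∫ ω : Fin m → EuclideanSpace ℝ (Fin d),
      (∑ i : Fin m,
        ((Real.sqrt m)⁻¹ * Real.exp (-‖x‖ ^ 2 / 2) * Real.exp ((inner ℝ (ω i) x : ℝ))) *
        ((Real.sqrt m)⁻¹ * Real.exp (-‖y‖ ^ 2 / 2) * Real.exp ((inner ℝ (ω i) y : ℝ))))
      ∂(Measure.pi fun _ : Fin m => stdGaussian d)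
    = Real.exp ((inner ℝ x y : ℝ)) :=
  performer_exp_unbiased_general d m hm x y
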